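/- A symmetric monomial ideal is polymatroidal if and only if it is a symmetric strongly shifted ideal with exactly one partition Borel generator (i.e., a principal Borel sssi Sss({λ}) for some partition λ). -/

import Mathlib

open MvPolynomial

/-- The monomial `x^a` in `K[x_1,...,x_n]`. -/
noncomputable def mon (K : Type) [Field K] (n : ℕ) (a : Fin n → ℕ) :
    MvPolynomial (Fin n) K :=
  monomial (Finsupp.equivFunOnFinite.symm a) 1

/-- A monomial ideal: an ideal generated by monomials. -/
def IsMonomialIdeal (K : Type) [Field K] (n : ℕ)
    (I : Ideal (MvPolynomial (Fin n) K)) : Prop :=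
  ∃ S : Set (Fin n → ℕ), I = Ideal.span (mon K n '' S)

/-- A symmetric (`𝔖_n`-fixed) ideal. -/
def IsSymmetricIdeal (K : Type) [Field K] (n : ℕ)
    (I : Ideal (MvPolynomial (Fin n) K)) : Prop :=
  ∀ σ : Equiv.Perm (Fin n), Ideal.map (rename (σ : Fin n → Fin n)) I = I

/-- The exponent vector obtained from `a` by the Borel move `x^a ↦ x^a · x_i / x_j`. -/
def borelMoveVec (n : ℕ) (a : Fin n → ℕ) (i j : Fin n) : Fin n → ℕ :=
  fun k => if k = i then a k + 1 else if k = j then a k - 1 else a k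

/-- A symmetric strongly shifted ideal (sssi). -/
def IsSSSI (K : Type) [Field K] (n : ℕ)
    (I : Ideal (MvPolynomial (Fin n) K)) : Prop :=
  IsMonomialIdeal K n I ∧ IsSymmetricIdeal K n I ∧
    ∀ lam : Fin n → ℕ, Monotone lam → mon K n lam ∈ I →
      ∀ i j : Fin n, i < j → lam i < lam j →
        mon K n (borelMoveVec n lam i j) ∈ I

/-- The dominance order on partitions: `μ ⊴ λ`. -/
def dominates (n : ℕ) (μ lam : Fin n → ℕ) : Prop :=
  ∀ k : Fin n, ∑ i ∈ Finset.Ici k, μ i ≤ ∑ i ∈ Finset.Ici k, lam i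

/-- `Sss(B)`: the smallest symmetric strongly shifted ideal containing the
monomials `x^λ`, `λ ∈ B`. -/
noncomputable def Sss (K : Type) [Field K] (n : ℕ) (B : Set (Fin n → ℕ)) :
    Ideal (MvPolynomial (Fin n) K) :=
  sInf {J | IsSSSI K n J ∧ ∀ lam ∈ B, mon K n lam ∈ J}

/-- `a` is the exponent vector of a minimal monomial generator of the
monomial ideal `I`. -/
def IsMinGen (K : Type) [Field K] (n : ℕ) (I : Ideal (MvPolynomial (Fin n) K))
    (a : Fin n → ℕ) : Prop :=
  mon K n a ∈ I ∧ ∀ b : Fin n → ℕ, (∀ i, b i ≤ a i) → b ≠ a → mon K n b ∉ I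

/-- A polymatroidal ideal: an equigenerated monomial ideal whose minimal
monomial generators satisfy the exchange property. -/
def IsPolymatroidal (K : Type) [Field K] (n : ℕ)
    (I : Ideal (MvPolynomial (Fin n) K)) : Prop :=
  IsMonomialIdeal K n I ∧
    (∃ d : ℕ, ∀ a : Fin n → ℕ, IsMinGen K n I a → ∑ i, a i = d) ∧
    ∀ a b : Fin n → ℕ, IsMinGen K n I a → IsMinGen K n I b →
      ∀ i : Fin n, b i < a i →
        ∃ j : Fin n, a j < b j ∧ mon K n (borelMoveVec n a j i) ∈ I

/-!
The minimal generators of a polymatroidal ideal form the set `B` of bases of a discrete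
polymatroid. When the ideal is symmetric, exchanging `a ∈ B` against a permuted copy of itself
shows that `B` is closed under Borel moves, so the ideal is strongly shifted. Take `λ ∈ B` whose
sequence of top-`m` sums is lexicographically largest: the augmentation property of polymatroids
forces `λ` to majorize every element of `B`, and every partition majorized by `λ` is reached from
`λ` by Borel moves through partitions, so `I = Sss({λ})`. Conversely, the vectors majorized by `λ`
are the minimal generators of `Sss({λ})`, and they satisfy the exchange property because the
top-`m` sums of `λ` are concave in `m`, which makes `S ↦ topSum |S| λ` submodular.
-/

lemma Finset.sum_le_sum_of_card_le_of_forall_le {ι : Type*} [DecidableEq ι] {S T : Finset ι}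
    {f : ι → ℕ} (hcard : S.card ≤ T.card) (hf : ∀ x ∈ S \ T, ∀ y ∈ T \ S, f x ≤ f y) :
    ∑ x ∈ S, f x ≤ ∑ x ∈ T, f x := by
  rw [← Finset.sum_inter_add_sum_sdiff S T, ← Finset.sum_inter_add_sum_sdiff T S,
    Finset.inter_comm]
  refine Nat.add_le_add_left ?_ _
  rcases (S \ T).eq_empty_or_nonempty with hST | hST
  · simp [hST]
  calc ∑ x ∈ S \ T, f x ≤ (S \ T).card • (S \ T).sup' hST f :=
        Finset.sum_le_card_nsmul _ _ _ fun x hx => Finset.le_sup' f hx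
    _ ≤ (T \ S).card • (S \ T).sup' hST f :=
        Nat.mul_le_mul_right _ (Finset.card_sdiff_le_card_sdiff_iff.2 hcard)
    _ ≤ ∑ x ∈ T \ S, f x :=
        Finset.card_nsmul_le_sum _ _ _ fun y hy => Finset.sup'_le hST f fun x hx => hf x hx y hy

lemma Finset.sum_add_sum_tsub {ι : Type*} (s : Finset ι) (x y : ι → ℕ) :
    ∑ i ∈ s, x i + ∑ i ∈ s, (y i - x i) = ∑ i ∈ s, y i + ∑ i ∈ s, (x i - y i) := by
  rw [← Finset.sum_add_distrib, ← Finset.sum_add_distrib]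
  exact Finset.sum_congr rfl fun i _ => by omega

lemma toLex_lt_of_le_of_lt {ι β : Type*} [LinearOrder ι] [WellFoundedLT ι] [LinearOrder β]
    {f g : ι → β} {m : ι} (hle : ∀ l ≤ m, f l ≤ g l) (hlt : f m < g m) :
    toLex f < toLex g := by
  obtain ⟨l, hlm, hl⟩ := exists_minimal_le_of_wellFoundedLT (fun l => f l < g l) m hlt
  exact ⟨l, fun k hk => le_antisymm (hle k (hk.le.trans hlm))
    (not_lt.1 fun h => hk.not_ge (hl.2 h hk.le)), hl.1⟩

section Monomials

variable {K : Type} [Field K] {n : ℕ}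

lemma rename_mon (σ : Equiv.Perm (Fin n)) (a : Fin n → ℕ) :
    rename σ (mon K n a) = mon K n (a ∘ σ.symm) := by
  rw [mon, rename_monomial, mon]
  exact congrArg (monomial · 1) (by ext; simp [Finsupp.mapDomain_equiv_apply])

lemma mon_mem_span_iff {S : Set (Fin n → ℕ)} {a : Fin n → ℕ} :
    mon K n a ∈ Ideal.span (mon K n '' S) ↔ ∃ s ∈ S, s ≤ a := by
  classical
  have hS : mon K n '' S =
      (fun s => monomial s (1 : K)) '' (Finsupp.equivFunOnFinite.symm '' S) := by
    rw [Set.image_image]; rfl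
  rw [hS, mem_ideal_span_monomial_image, mon, support_monomial, if_neg one_ne_zero]
  simp only [Finset.mem_singleton, forall_eq, Set.mem_image, Finsupp.le_def]
  constructor
  · rintro ⟨s, ⟨s, hs, rfl⟩, hle⟩
    exact ⟨s, hs, fun i => by simpa using hle i⟩
  · rintro ⟨s, hs, hle⟩
    exact ⟨_, ⟨s, hs, rfl⟩, fun i => by simpa using hle i⟩

lemma IsSymmetricIdeal.mon_comp_mem {I : Ideal (MvPolynomial (Fin n) K)}
    (hI : IsSymmetricIdeal K n I) {a : Fin n → ℕ} (ha : mon K n a ∈ I)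
    (σ : Equiv.Perm (Fin n)) : mon K n (a ∘ σ) ∈ I := by
  have h := Ideal.mem_map_of_mem (rename σ.symm) ha
  rwa [hI σ.symm, rename_mon, Equiv.symm_symm] at h

end Monomials

section BorelMove

variable {n : ℕ} {a t : Fin n → ℕ} {i j : Fin n}

lemma borelMoveVec_add_ite (hij : i ≠ j) (hj : 0 < a j) (k : Fin n) :
    borelMoveVec n a i j k + (if k = j then 1 else 0) = a k + (if k = i then 1 else 0) := by
  unfold borelMoveVec
  grind

lemma sum_borelMoveVec_add (hij : i ≠ j) (hj : 0 < a j) (S : Finset (Fin n)) :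
    ∑ k ∈ S, borelMoveVec n a i j k + (if j ∈ S then 1 else 0) =
      ∑ k ∈ S, a k + (if i ∈ S then 1 else 0) := by
  rw [← Finset.sum_ite_eq' S j (fun _ => 1), ← Finset.sum_ite_eq' S i (fun _ => 1),
    ← Finset.sum_add_distrib, ← Finset.sum_add_distrib]
  exact Finset.sum_congr rfl fun k _ => borelMoveVec_add_ite hij hj k

lemma sum_borelMoveVec (hij : i ≠ j) (hj : 0 < a j) :
    ∑ k, borelMoveVec n a i j k = ∑ k, a k := by
  simpa using sum_borelMoveVec_add hij hj Finset.univ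

lemma borelMoveVec_borelMoveVec (hij : i ≠ j) (hi : 0 < a i) :
    borelMoveVec n (borelMoveVec n a j i) i j = a := by
  funext k
  unfold borelMoveVec
  grind

lemma borelMoveVec_mono (h : t ≤ a) : borelMoveVec n t i j ≤ borelMoveVec n a i j := by
  intro k
  have := h k
  unfold borelMoveVec
  grind

lemma le_borelMoveVec (h : t ≤ a) (hj : t j < a j) : t ≤ borelMoveVec n a i j := by
  intro k
  have := h k
  unfold borelMoveVec
  grind

end BorelMove

section MinGen

variable {K : Type} [Field K] {n : ℕ} {I : Ideal (MvPolynomial (Fin n) K)} {a : Fin n → ℕ}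

lemma isMinGen_iff_minimal : IsMinGen K n I a ↔ Minimal (fun b => mon K n b ∈ I) a := by
  refine and_congr_right fun _ => ⟨fun h b hb hba => ?_, fun h b hba hne hb => ?_⟩
  · by_contra hab
    exact h b hba (fun hb' => hab (hb' ▸ le_rfl)) hb
  · exact hne (le_antisymm hba (h hb hba))

lemma exists_isMinGen_le (ha : mon K n a ∈ I) : ∃ b ≤ a, IsMinGen K n I b := by
  simpa only [isMinGen_iff_minimal] using exists_minimal_le_of_wellFoundedLT _ a ha

lemma isMinGen_of_sum_eq {d : ℕ} (hd : ∀ b, IsMinGen K n I b → ∑ i, b i = d)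
    (ha : mon K n a ∈ I) (hsum : ∑ i, a i = d) : IsMinGen K n I a := by
  obtain ⟨b, hba, hb⟩ := exists_isMinGen_le ha
  have hsum' : ∑ i, b i = ∑ i, a i := by rw [hsum, hd b hb]
  have : b = a := eq_of_le_of_not_lt hba fun h => (Fintype.sum_strictMono h).ne hsum'
  exact this ▸ hb

lemma IsMinGen.comp_perm (hsym : IsSymmetricIdeal K n I) (ha : IsMinGen K n I a)
    (σ : Equiv.Perm (Fin n)) : IsMinGen K n I (a ∘ σ) := by
  refine ⟨hsym.mon_comp_mem ha.1 σ, fun b hba hne hb => ?_⟩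
  refine ha.2 (b ∘ σ.symm) (fun i => by simpa using hba (σ.symm i)) (fun h => hne ?_)
    (by simpa using hsym.mon_comp_mem hb σ.symm)
  rw [← h]
  ext; simp

lemma IsMonomialIdeal.eq_span_isMinGen (hI : IsMonomialIdeal K n I) :
    I = Ideal.span (mon K n '' {a | IsMinGen K n I a}) := by
  refine le_antisymm ?_ (Ideal.span_le.2 ?_)
  · obtain ⟨S, rfl⟩ := hI
    refine Ideal.span_le.2 ?_
    rintro _ ⟨s, hs, rfl⟩
    obtain ⟨b, hbs, hb⟩ :=
      exists_isMinGen_le (Ideal.subset_span (Set.mem_image_of_mem (mon K n) hs))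
    exact mon_mem_span_iff.2 ⟨b, hb, hbs⟩
  · rintro _ ⟨b, hb, rfl⟩
    exact hb.1

lemma IsMonomialIdeal.exists_isMinGen (hI : IsMonomialIdeal K n I) (hbot : I ≠ ⊥) :
    ∃ a, IsMinGen K n I a := by
  by_contra! h
  refine hbot ?_
  rw [hI.eq_span_isMinGen]
  simp [h]

variable {S : Set (Fin n → ℕ)}

lemma isMinGen_span_iff {d : ℕ} (hS : ∀ s ∈ S, ∑ i, s i = d) :
    IsMinGen K n (Ideal.span (mon K n '' S)) a ↔ a ∈ S := by
  refine ⟨fun ha => ?_, fun ha => ⟨Ideal.subset_span ⟨a, ha, rfl⟩, fun b hba hne hb => ?_⟩⟩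
  · obtain ⟨s, hs, hsa⟩ := mon_mem_span_iff.1 ha.1
    by_contra has
    exact ha.2 s hsa (fun h => has (h ▸ hs)) (Ideal.subset_span ⟨s, hs, rfl⟩)
  · obtain ⟨s, hs, hsb⟩ := mon_mem_span_iff.1 hb
    have hlt : ∑ i, b i < ∑ i, a i := Fintype.sum_strictMono (lt_of_le_of_ne hba hne)
    have hle : ∑ i, s i ≤ ∑ i, b i := Finset.sum_le_sum fun i _ => hsb i
    have := hS s hs
    have := hS a ha
    omega

end MinGen

section ExponentSets

variable {n : ℕ}

def IsSymmetricSet (S : Set (Fin n → ℕ)) : Prop :=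
  ∀ a ∈ S, ∀ σ : Equiv.Perm (Fin n), a ∘ σ ∈ S

def IsBorelClosed (S : Set (Fin n → ℕ)) : Prop :=
  ∀ a ∈ S, ∀ i j, a i < a j → borelMoveVec n a i j ∈ S

def HasExchange (S : Set (Fin n → ℕ)) : Prop :=
  ∀ a ∈ S, ∀ b ∈ S, ∀ i, b i < a i → ∃ j, a j < b j ∧ borelMoveVec n a j i ∈ S

variable {S : Set (Fin n → ℕ)}

/-- Exchanging `a` against `a ∘ swap i j` can only move a unit from `j` to `i`. -/
lemma IsSymmetricSet.isBorelClosed (hsym : IsSymmetricSet S) (hex : HasExchange S) :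
    IsBorelClosed S := by
  intro a ha i j hij
  obtain ⟨k, hk, hmove⟩ :=
    hex a ha (a ∘ Equiv.swap i j) (hsym a ha _) j (by simpa using hij)
  obtain rfl : k = i := by
    by_contra hki
    by_cases hkj : k = j
    · subst hkj
      simp only [Function.comp_apply, Equiv.swap_apply_right] at hk
      omega
    · simp [Equiv.swap_apply_of_ne_of_ne hki hkj] at hk
  exact hmove

variable {K : Type} [Field K]

lemma IsSymmetricSet.isSymmetricIdeal_span (hS : IsSymmetricSet S) :
    IsSymmetricIdeal K n (Ideal.span (mon K n '' S)) := by
  intro σ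
  rw [Ideal.map_span, Set.image_image]
  congr 1
  ext p
  constructor
  · rintro ⟨s, hs, rfl⟩
    exact ⟨s ∘ σ.symm, hS s hs σ.symm, (rename_mon σ s).symm⟩
  · rintro ⟨s, hs, rfl⟩
    refine ⟨s ∘ σ, hS s hs σ, ?_⟩
    simp only [rename_mon, Function.comp_assoc, Equiv.self_comp_symm, Function.comp_id]

lemma isSSSI_span (hsym : IsSymmetricSet S) (hB : IsBorelClosed S) :
    IsSSSI K n (Ideal.span (mon K n '' S)) := by
  refine ⟨⟨S, rfl⟩, hsym.isSymmetricIdeal_span, fun mu _ hmu i j _ hij => ?_⟩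
  obtain ⟨t, ht, htmu⟩ := mon_mem_span_iff.1 hmu
  rcases (htmu j).lt_or_eq with htj | htj
  · exact mon_mem_span_iff.2 ⟨t, ht, le_borelMoveVec htmu htj⟩
  · exact mon_mem_span_iff.2
      ⟨_, hB t ht i j ((htmu i).trans_lt (htj ▸ hij)), borelMoveVec_mono htmu⟩

lemma isPolymatroidal_span {d : ℕ} (hdeg : ∀ s ∈ S, ∑ i, s i = d) (hex : HasExchange S) :
    IsPolymatroidal K n (Ideal.span (mon K n '' S)) := by
  refine ⟨⟨S, rfl⟩, ⟨d, fun a ha => hdeg a ((isMinGen_span_iff hdeg).1 ha)⟩,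
    fun a b ha hb i hi => ?_⟩
  rw [isMinGen_span_iff hdeg] at ha hb
  obtain ⟨j, hj, hmove⟩ := hex a ha b hb i hi
  exact ⟨j, hj, Ideal.subset_span ⟨_, hmove, rfl⟩⟩

end ExponentSets

section TopSum

variable {n : ℕ}

def topSum (m : ℕ) (a : Fin n → ℕ) : ℕ :=
  ((Finset.univ.powerset.filter fun S : Finset (Fin n) => S.card ≤ m).sup fun S => ∑ i ∈ S, a i)

variable {m : ℕ} {a : Fin n → ℕ}

lemma sum_le_topSum {S : Finset (Fin n)} (h : S.card ≤ m) : ∑ i ∈ S, a i ≤ topSum m a :=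
  Finset.le_sup (f := fun S => ∑ i ∈ S, a i)
    (Finset.mem_filter.2 ⟨Finset.mem_powerset.2 S.subset_univ, h⟩)

lemma topSum_le_iff {c : ℕ} :
    topSum m a ≤ c ↔ ∀ S : Finset (Fin n), S.card ≤ m → ∑ i ∈ S, a i ≤ c :=
  Finset.sup_le_iff.trans (by simp)

lemma exists_sum_eq_topSum (m : ℕ) (a : Fin n → ℕ) :
    ∃ S : Finset (Fin n), S.card ≤ m ∧ ∑ i ∈ S, a i = topSum m a := by
  obtain ⟨S, hS, hval⟩ := Finset.exists_mem_eq_sup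
    (Finset.univ.powerset.filter fun S : Finset (Fin n) => S.card ≤ m) ⟨∅, by simp⟩
    fun S => ∑ i ∈ S, a i
  exact ⟨S, (Finset.mem_filter.1 hS).2, hval.symm⟩

lemma topSum_zero : topSum 0 a = 0 :=
  Nat.eq_zero_of_le_zero <| topSum_le_iff.2 fun S hS => by
    rw [Finset.card_eq_zero.1 (Nat.le_zero.1 hS), Finset.sum_empty]

lemma topSum_mono_left {m' : ℕ} (h : m ≤ m') : topSum m a ≤ topSum m' a :=
  topSum_le_iff.2 fun _ hS => sum_le_topSum (hS.trans h)

lemma topSum_comp_perm (σ : Equiv.Perm (Fin n)) : topSum m (a ∘ σ) = topSum m a := by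
  have key : ∀ (b : Fin n → ℕ) (τ : Equiv.Perm (Fin n)), topSum m (b ∘ τ) ≤ topSum m b :=
    fun b τ => topSum_le_iff.2 fun S hS =>
      (Finset.sum_map S τ.toEmbedding b).symm.trans_le (sum_le_topSum (by simpa using hS))
  refine le_antisymm (key a σ) ?_
  simpa [Function.comp_assoc] using key (a ∘ σ) σ.symm

/-- Moving one element of an optimal `(m + 2)`-set that is missing from an optimal `m`-set over
to the latter leaves two sets of size at most `m + 1`. -/
lemma topSum_add_topSum_add_two_le (m : ℕ) (a : Fin n → ℕ) :
    topSum m a + topSum (m + 2) a ≤ topSum (m + 1) a + topSum (m + 1) a := by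
  obtain ⟨S, hScard, hS⟩ := exists_sum_eq_topSum m a
  obtain ⟨U, hUcard, hU⟩ := exists_sum_eq_topSum (m + 2) a
  by_cases hUS : U ⊆ S
  · have h1 : topSum (m + 2) a ≤ topSum m a :=
      hU ▸ sum_le_topSum ((Finset.card_le_card hUS).trans hScard)
    have h2 : topSum m a ≤ topSum (m + 1) a := topSum_mono_left (by omega)
    omega
  obtain ⟨u, huU, huS⟩ := Finset.not_subset.1 hUS
  have h1 : a u + ∑ i ∈ S, a i ≤ topSum (m + 1) a := by
    rw [← Finset.sum_insert huS]
    exact sum_le_topSum ((Finset.card_insert_le _ _).trans (by omega))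
  have h2 : ∑ i ∈ U.erase u, a i ≤ topSum (m + 1) a :=
    sum_le_topSum (by rw [Finset.card_erase_of_mem huU]; omega)
  rw [← Finset.add_sum_erase U a huU] at hU
  omega

lemma topSum_succ_add_le {p q : ℕ} (hpq : p ≤ q) :
    topSum (q + 1) a + topSum p a ≤ topSum q a + topSum (p + 1) a := by
  induction q, hpq using Nat.le_induction with
  | base => omega
  | succ q _ ih =>
    have := topSum_add_topSum_add_two_le q a
    show topSum (q + 2) a + _ ≤ _
    omega

lemma topSum_add_add_le {p s : ℕ} (hps : p ≤ s) (j : ℕ) :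
    topSum (s + j) a + topSum p a ≤ topSum s a + topSum (p + j) a := by
  induction j with
  | zero => rfl
  | succ j ih =>
    have := topSum_succ_add_le (a := a) (Nat.add_le_add_right hps j)
    rw [← add_assoc, ← add_assoc]
    omega

lemma topSum_card_union_add_le (S T : Finset (Fin n)) :
    topSum (S ∪ T).card a + topSum (S ∩ T).card a ≤ topSum S.card a + topSum T.card a := by
  have h := topSum_add_add_le (a := a) (Finset.card_le_card (Finset.inter_subset_left : S ∩ T ⊆ S))
    ((S ∪ T).card - S.card)
  have hcard := Finset.card_union_add_card_inter S T
  have hle := Finset.card_le_card (Finset.subset_union_left : S ⊆ S ∪ T)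
  rwa [Nat.add_sub_cancel' hle,
    show (S ∩ T).card + ((S ∪ T).card - S.card) = T.card by omega] at h

lemma topSum_borelMoveVec_le {i j : Fin n} (h : a i < a j) :
    topSum m (borelMoveVec n a i j) ≤ topSum m a := by
  have hij : i ≠ j := ne_of_apply_ne a h.ne
  refine topSum_le_iff.2 fun S hS => ?_
  have hsum := sum_borelMoveVec_add (a := a) hij (by omega) S
  have hle := sum_le_topSum (a := a) hS
  by_cases hiS : i ∈ S <;> by_cases hjS : j ∈ S <;> simp only [hiS, hjS, if_true, if_false] at hsum
  · omega
  · -- the bound comes from the set with `j` in place of `i`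
    have hj' : j ∉ S.erase i := fun h => hjS (Finset.mem_of_mem_erase h)
    have hcard : (insert j (S.erase i)).card ≤ m := by
      rw [Finset.card_insert_of_notMem hj', Finset.card_erase_of_mem hiS]
      have := Finset.card_pos.2 ⟨i, hiS⟩
      omega
    have h1 := sum_le_topSum (a := a) hcard
    rw [Finset.sum_insert hj'] at h1
    rw [← Finset.add_sum_erase S a hiS] at hsum
    omega
  · omega
  · omega

/-- The last `m` indices (all of `Fin n` once `m ≥ n`). -/
def topIndices (m : ℕ) : Finset (Fin n) :=
  Finset.univ.filter fun k => n - m ≤ k.val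

lemma card_topIndices : (topIndices m : Finset (Fin n)).card = n - (n - m) := by
  have h := Finset.card_filter_add_card_filter_not (s := Finset.univ)
    (fun k : Fin n => n - m ≤ k.val)
  simp only [not_le, Fin.card_filter_val_lt, Finset.card_univ, Fintype.card_fin] at h
  rw [topIndices]
  omega

lemma card_topIndices_le : (topIndices m : Finset (Fin n)).card ≤ m := by
  rw [card_topIndices]
  omega

lemma topIndices_mono {m' : ℕ} (h : m ≤ m') :
    (topIndices m : Finset (Fin n)) ⊆ topIndices m' := by
  intro k
  simp only [topIndices, Finset.mem_filter, Finset.mem_univ, true_and]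
  omega

lemma topSum_eq_sum_topIndices (ha : Monotone a) : topSum m a = ∑ i ∈ topIndices m, a i := by
  refine le_antisymm (topSum_le_iff.2 fun S hS => ?_) (sum_le_topSum card_topIndices_le)
  refine Finset.sum_le_sum_of_card_le_of_forall_le ?_ fun x hx y hy => ha ?_
  · have := S.card_le_univ
    rw [Fintype.card_fin] at this
    rw [card_topIndices]
    omega
  · simp only [topIndices, Finset.mem_sdiff, Finset.mem_filter, Finset.mem_univ, true_and] at hx hy
    rw [Fin.le_def]
    omega

lemma sum_Ici_eq_topSum (ha : Monotone a) (k : Fin n) :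
    ∑ i ∈ Finset.Ici k, a i = topSum (n - k) a := by
  rw [topSum_eq_sum_topIndices ha]
  congr 1
  ext x
  simp only [topIndices, Finset.mem_Ici, Finset.mem_filter, Finset.mem_univ, true_and, Fin.le_def]
  omega

end TopSum

section Dominance

variable {n : ℕ}

lemma monotone_borelMoveVec {a : Fin n → ℕ} {i j : Fin n} (ha : Monotone a) (hij : i < j)
    (hi : 0 < a i) (hpre : ∀ p < i, a p < a i) (hpost : ∀ q, j < q → a j < a q) :
    Monotone (borelMoveVec n a j i) := by
  intro p q hpq
  have := ha hpq
  unfold borelMoveVec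
  grind

lemma sum_Ici_eq_add_sum_Ioi (f : Fin n → ℕ) (k : Fin n) :
    ∑ x ∈ Finset.Ici k, f x = f k + ∑ x ∈ Finset.Ioi k, f x := by
  rw [← Finset.Ioi_insert, Finset.sum_insert Finset.notMem_Ioi_self]

/-- Were `μ p ≥ μ i`, then `μ > λ` on all of `[p, i)`, so `μ ⊴ λ` would fail at `p`. -/
lemma lt_of_lt_of_sum_Ici_eq {mu lam : Fin n → ℕ} (hmu : Monotone mu) (hlam : Monotone lam)
    (hdom : dominates n mu lam) {i : Fin n} (hlami : lam i < mu i)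
    (heq : ∑ x ∈ Finset.Ici i, mu x = ∑ x ∈ Finset.Ici i, lam x) {p : Fin n} (hp : p < i) :
    mu p < mu i := by
  by_contra! hip
  have hsub : Finset.Ici i ⊆ Finset.Ici p := Finset.Ici_subset_Ici.2 hp.le
  have hlt : ∑ x ∈ Finset.Ici p \ Finset.Ici i, lam x <
      ∑ x ∈ Finset.Ici p \ Finset.Ici i, mu x := by
    refine Finset.sum_lt_sum (fun x hx => ?_) ⟨p, by simpa using hp, ?_⟩
    · simp only [Finset.mem_sdiff, Finset.mem_Ici, not_le] at hx
      have := hlam hx.2.le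
      have := hmu hx.1
      omega
    · have := hlam hp.le
      omega
  have := hdom p
  rw [← Finset.sum_sdiff hsub, ← Finset.sum_sdiff hsub (f := lam), heq] at this
  omega

/-- `j` is the last index where `μ` and `λ` differ and `i` the last one before it where their tail
sums agree; moving a unit of `μ` from `i` up to `j` keeps it a partition dominated by `λ`. -/
lemma exists_pivot {mu lam : Fin n → ℕ} (hmu : Monotone mu) (hlam : Monotone lam)
    (hsum : ∑ x, mu x = ∑ x, lam x) (hdom : dominates n mu lam) (hne : mu ≠ lam) :
    ∃ i j, i < j ∧ lam i < mu i ∧ (∀ p < i, mu p < mu i) ∧ (∀ q, j < q → mu j < mu q) ∧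
      ∀ k, i < k → k ≤ j → ∑ x ∈ Finset.Ici k, mu x < ∑ x ∈ Finset.Ici k, lam x := by
  obtain ⟨j, hj, hjmax⟩ := (Finset.univ.filter fun k => mu k ≠ lam k).exists_max_image id
    (by obtain ⟨k, hk⟩ := Function.ne_iff.1 hne; exact ⟨k, by simpa using hk⟩)
  simp only [Finset.mem_filter, Finset.mem_univ, true_and, id] at hj hjmax
  have hafter : ∀ q, j < q → mu q = lam q := fun q hq => by_contra fun h => (hjmax q h).not_gt hq
  have hIoi : ∑ x ∈ Finset.Ioi j, mu x = ∑ x ∈ Finset.Ioi j, lam x :=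
    Finset.sum_congr rfl fun q hq => hafter q (Finset.mem_Ioi.1 hq)
  have hmuj : mu j < lam j := by
    have := hdom j
    rw [sum_Ici_eq_add_sum_Ioi, sum_Ici_eq_add_sum_Ioi, hIoi] at this
    omega
  have h0 : (⟨0, j.pos⟩ : Fin n) ≤ j := Fin.le_def.2 (Nat.zero_le _)
  have hIci0 : Finset.Ici (⟨0, j.pos⟩ : Fin n) = Finset.univ :=
    Finset.eq_univ_of_forall fun x => Finset.mem_Ici.2 (Fin.le_def.2 (Nat.zero_le _))
  obtain ⟨i, hi, himax⟩ := (Finset.univ.filter fun k =>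
      k ≤ j ∧ ∑ x ∈ Finset.Ici k, mu x = ∑ x ∈ Finset.Ici k, lam x).exists_max_image id
    ⟨_, Finset.mem_filter.2 ⟨Finset.mem_univ _, h0, by rw [hIci0, hsum]⟩⟩
  simp only [Finset.mem_filter, Finset.mem_univ, true_and, id] at hi himax
  have hij : i < j := by
    refine lt_of_le_of_ne hi.1 fun hij => ?_
    have := hi.2
    rw [hij, sum_Ici_eq_add_sum_Ioi, sum_Ici_eq_add_sum_Ioi, hIoi] at this
    omega
  have hstrict : ∀ k, i < k → k ≤ j →
      ∑ x ∈ Finset.Ici k, mu x < ∑ x ∈ Finset.Ici k, lam x :=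
    fun k hik hkj => lt_of_le_of_ne (hdom k) fun h => (himax k ⟨hkj, h⟩).not_gt hik
  have hlami : lam i < mu i := by
    have hIoi_i : Finset.Ioi i = Finset.Ici (⟨i + 1, by omega⟩ : Fin n) := by
      ext
      simp only [Finset.mem_Ioi, Finset.mem_Ici, Fin.lt_def, Fin.le_def]
      omega
    have h1 := hstrict ⟨i + 1, by omega⟩ (Fin.lt_def.2 (Nat.lt_succ_self _))
      (Fin.le_def.2 (Fin.lt_def.1 hij))
    have h2 := hi.2
    rw [sum_Ici_eq_add_sum_Ioi, sum_Ici_eq_add_sum_Ioi, hIoi_i] at h2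
    omega
  exact ⟨i, j, hij, hlami, fun p => lt_of_lt_of_sum_Ici_eq hmu hlam hdom hlami hi.2,
    fun q hq => hafter q hq ▸ hmuj.trans_le (hlam hq.le), hstrict⟩

variable {K : Type} [Field K] {J : Ideal (MvPolynomial (Fin n) K)} {lam : Fin n → ℕ}

lemma IsSSSI.mon_mem_of_dominates (hJ : IsSSSI K n J) (hlam : Monotone lam)
    (hJlam : mon K n lam ∈ J) {mu : Fin n → ℕ} (hmu : Monotone mu)
    (hsum : ∑ x, mu x = ∑ x, lam x) (hdom : dominates n mu lam) : mon K n mu ∈ J := by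
  induction h : ∑ k, (∑ x ∈ Finset.Ici k, lam x - ∑ x ∈ Finset.Ici k, mu x)
    using Nat.strong_induction_on generalizing mu with
  | _ D ih =>
  by_cases hne : mu = lam
  · exact hne ▸ hJlam
  obtain ⟨i, j, hij, hlami, hpre, hpost, hstrict⟩ := exists_pivot hmu hlam hsum hdom hne
  have hi : 0 < mu i := by omega
  set mu' := borelMoveVec n mu j i
  have htail : ∀ k, ∑ x ∈ Finset.Ici k, mu' x =
      ∑ x ∈ Finset.Ici k, mu x + if i < k ∧ k ≤ j then 1 else 0 := by
    intro k
    have := sum_borelMoveVec_add hij.ne' hi (Finset.Ici k)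
    simp only [Finset.mem_Ici] at this
    grind
  have hdom' : dominates n mu' lam := fun k => by
    rw [htail k]
    split_ifs with hk
    · exact hstrict k hk.1 hk.2
    · simpa using hdom k
  have hmono' : Monotone mu' := monotone_borelMoveVec hmu hij hi hpre hpost
  have hlt : ∑ k, (∑ x ∈ Finset.Ici k, lam x - ∑ x ∈ Finset.Ici k, mu' x) < D := by
    rw [← h]
    refine Finset.sum_lt_sum (fun k _ => by rw [htail k]; omega) ⟨j, Finset.mem_univ _, ?_⟩
    have := hstrict j hij le_rfl
    rw [htail j, if_pos ⟨hij, le_rfl⟩]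
    omega
  have hmem := ih _ hlt hmono' ((sum_borelMoveVec hij.ne' hi).trans hsum) hdom' rfl
  have hmove := hJ.2.2 mu' hmono' hmem i j hij (by
    have := hmu hij.le
    simp only [mu', borelMoveVec]
    grind)
  rwa [borelMoveVec_borelMoveVec hij.ne hi] at hmove

def dominatedSet (lam : Fin n → ℕ) : Set (Fin n → ℕ) :=
  {a | ∑ i, a i = ∑ i, lam i ∧ ∀ m, topSum m a ≤ topSum m lam}

lemma mem_dominatedSet_self : lam ∈ dominatedSet lam :=
  ⟨rfl, fun _ => le_rfl⟩

lemma isSymmetricSet_dominatedSet : IsSymmetricSet (dominatedSet lam) :=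
  fun a ha σ => ⟨(Equiv.sum_comp σ a).trans ha.1, fun m => (topSum_comp_perm σ).trans_le (ha.2 m)⟩

lemma isBorelClosed_dominatedSet : IsBorelClosed (dominatedSet lam) :=
  fun a ha i j hij => ⟨(sum_borelMoveVec (ne_of_apply_ne a hij.ne) (by omega)).trans ha.1,
    fun m => (topSum_borelMoveVec_le hij).trans (ha.2 m)⟩

lemma IsSSSI.mon_mem_of_mem_dominatedSet (hJ : IsSSSI K n J) (hlam : Monotone lam)
    (hJlam : mon K n lam ∈ J) {a : Fin n → ℕ} (ha : a ∈ dominatedSet lam) : mon K n a ∈ J := by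
  have hsorted : Monotone (a ∘ Tuple.sort a) := Tuple.monotone_sort a
  have hsa := isSymmetricSet_dominatedSet a ha (Tuple.sort a)
  have h := hJ.mon_mem_of_dominates hlam hJlam hsorted hsa.1 fun k => by
    rw [sum_Ici_eq_topSum hsorted, sum_Ici_eq_topSum hlam]
    exact hsa.2 _
  simpa [Function.comp_assoc] using hJ.2.1.mon_comp_mem h (Tuple.sort a).symm

lemma sss_singleton_eq_span (hlam : Monotone lam) :
    Sss K n {lam} = Ideal.span (mon K n '' dominatedSet lam) := by
  refine le_antisymm (sInf_le ⟨isSSSI_span isSymmetricSet_dominatedSet isBorelClosed_dominatedSet,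
    by rintro _ rfl; exact Ideal.subset_span ⟨_, mem_dominatedSet_self, rfl⟩⟩) ?_
  refine le_sInf fun J' ⟨hJ', hJ'lam⟩ => Ideal.span_le.2 ?_
  rintro _ ⟨a, ha, rfl⟩
  exact hJ'.mon_mem_of_mem_dominatedSet hlam (hJ'lam lam rfl) ha

end Dominance

section Exchange

variable {n : ℕ} {lam a : Fin n → ℕ}

lemma sum_le_topSum_card_of_mem_dominatedSet (ha : a ∈ dominatedSet lam) (S : Finset (Fin n)) :
    ∑ x ∈ S, a x ≤ topSum S.card lam :=
  (sum_le_topSum le_rfl).trans (ha.2 _)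

lemma supClosed_tight (ha : a ∈ dominatedSet lam) (i : Fin n) :
    SupClosed {S : Finset (Fin n) | i ∉ S ∧ ∑ x ∈ S, a x = topSum S.card lam} := by
  rintro S ⟨hiS, hS⟩ T ⟨hiT, hT⟩
  refine ⟨by simp [hiS, hiT], ?_⟩
  have hunion := Finset.sum_union_inter (s₁ := S) (s₂ := T) (f := a)
  have h1 := sum_le_topSum_card_of_mem_dominatedSet ha (S ∪ T)
  have h2 := sum_le_topSum_card_of_mem_dominatedSet ha (S ∩ T)
  have h3 := topSum_card_union_add_le (a := lam) S T
  simp only [Finset.sup_eq_union]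
  omega

lemma exists_maximal_tight (ha : a ∈ dominatedSet lam) (i : Fin n) :
    ∃ A : Finset (Fin n), i ∉ A ∧ ∑ x ∈ A, a x = topSum A.card lam ∧
      ∀ S, i ∉ S → ∑ x ∈ S, a x = topSum S.card lam → S ⊆ A := by
  set F := Finset.univ.filter fun S : Finset (Fin n) =>
    i ∉ S ∧ ∑ x ∈ S, a x = topSum S.card lam
  have hF : F.sup id ∈ {S : Finset (Fin n) | i ∉ S ∧ ∑ x ∈ S, a x = topSum S.card lam} :=
    (supClosed_tight ha i).finsetSup_mem ⟨∅, by simp [F, topSum_zero]⟩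
      fun S hS => (Finset.mem_filter.1 hS).2
  exact ⟨F.sup id, hF.1, hF.2,
    fun S h1 h2 => Finset.le_sup (f := id) (Finset.mem_filter.2 ⟨Finset.mem_univ _, h1, h2⟩)⟩

/-- Moving a unit of `a` from `i` to `j` only breaks the bound on sets containing `j` but not
`i`; such sets are not tight when `j` lies outside the largest tight set `A` avoiding `i`, and
comparing `a` and `b` on `A` and at `i` shows that some `j ∉ A` has `a j < b j`. -/
lemma hasExchange_dominatedSet : HasExchange (dominatedSet lam) := by
  intro a ha b hb i hi
  obtain ⟨A, hiA, hA, hmax⟩ := exists_maximal_tight ha i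
  obtain ⟨j, hj, hjab⟩ : ∃ j ∈ (insert i A)ᶜ, a j < b j := by
    by_contra! h
    have h1 := Finset.sum_le_sum h
    have h2 := hA ▸ sum_le_topSum_card_of_mem_dominatedSet hb A
    have ea := Finset.sum_compl_add_sum (insert i A) a
    have eb := Finset.sum_compl_add_sum (insert i A) b
    rw [Finset.sum_insert hiA] at ea eb
    have := ha.1.trans hb.1.symm
    omega
  simp only [Finset.mem_compl, Finset.mem_insert, not_or] at hj
  refine ⟨j, hjab, (sum_borelMoveVec hj.1 (by omega)).trans ha.1,
    fun m => topSum_le_iff.2 fun S hS => ?_⟩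
  have hsum := sum_borelMoveVec_add (a := a) hj.1 (by omega) S
  have hle := sum_le_topSum_card_of_mem_dominatedSet ha S
  have hmono := topSum_mono_left (a := lam) hS
  by_cases hjS : j ∈ S <;> by_cases hiS : i ∈ S <;> simp only [hiS, hjS, if_true, if_false] at hsum
  · omega
  · have hnt : ∑ x ∈ S, a x ≠ topSum S.card lam := fun h => hj.2 (hmax S hiS h hjS)
    omega
  · omega
  · omega

end Exchange

section Augmentation

variable {n : ℕ} {B : Set (Fin n → ℕ)} {d : ℕ}

/-- The augmentation property of the independent vectors (those below some `b ∈ B`) of the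
discrete polymatroid with bases `B`. A base `bs ≥ c` closest to `b'` can absorb no exchange
from `b'`, which pins it to `c` wherever `c < c'` or `b' < bs`; counting then gives
`∑ c' ≤ ∑ c`. -/
lemma HasExchange.exists_augment (hex : HasExchange B) (hdeg : ∀ b ∈ B, ∑ i, b i = d)
    {c c' b b' : Fin n → ℕ} (hb : b ∈ B) (hb' : b' ∈ B) (hcb : c ≤ b) (hcb' : c' ≤ b')
    (hlt : ∑ i, c i < ∑ i, c' i) :
    ∃ i, c i < c' i ∧ ∃ b'' ∈ B, c ≤ b'' ∧ c i < b'' i := by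
  obtain ⟨bs, ⟨hbs, hcbs⟩, hmin⟩ := (measure fun x : Fin n → ℕ => ∑ k, (x k - b' k)).wf.has_min
    {x | x ∈ B ∧ c ≤ x} ⟨b, hb, hcb⟩
  by_contra! hno
  have H1 : ∀ i, c i < c' i → bs i = c i :=
    fun i h => le_antisymm (hno i h bs hbs hcbs) (hcbs i)
  have H2 : ∀ i, b' i < bs i → bs i = c i := by
    intro i hi
    by_contra hne
    have hci : c i < bs i := lt_of_le_of_ne (hcbs i) (Ne.symm hne)
    obtain ⟨j, hj, hmove⟩ := hex bs hbs b' hb' i hi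
    refine hmin _ ⟨hmove, fun k => ?_⟩ (show ∑ k, _ < ∑ k, (bs k - b' k) from
      Finset.sum_lt_sum (fun k _ => ?_) ⟨i, Finset.mem_univ _, ?_⟩)
    · have : c k ≤ bs k := hcbs k
      unfold borelMoveVec
      grind
    all_goals unfold borelMoveVec; grind
  have e1 : ∑ i, (c' i - c i) ≤ ∑ i, (b' i - bs i) :=
    Finset.sum_le_sum fun i _ => by
      have : c' i ≤ b' i := hcb' i
      by_cases h : c i < c' i
      · rw [H1 i h]; omega
      · omega
  have e2 : ∑ i, (bs i - b' i) ≤ ∑ i, (c i - c' i) :=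
    Finset.sum_le_sum fun i _ => by
      have : c' i ≤ b' i := hcb' i
      by_cases h : b' i < bs i
      · rw [H2 i h]; omega
      · omega
  have e3 := Finset.sum_add_sum_tsub Finset.univ bs b'
  have e4 := Finset.sum_add_sum_tsub Finset.univ c c'
  rw [hdeg bs hbs, hdeg b' hb'] at e3
  omega

lemma HasExchange.exists_topSum_lt (hex : HasExchange B) (hdeg : ∀ b ∈ B, ∑ i, b i = d)
    (hsym : IsSymmetricSet B) {lam b : Fin n → ℕ} (hlamB : lam ∈ B) (hlam : Monotone lam)
    (hb : b ∈ B) {m : ℕ} (hlt : topSum m lam < topSum m b) :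
    ∃ b'' ∈ B, (∀ l ≤ m, topSum l lam ≤ topSum l b'') ∧ topSum m lam < topSum m b'' := by
  set T : Finset (Fin n) := topIndices m
  have hbs : Monotone (b ∘ Tuple.sort b) := Tuple.monotone_sort b
  set c : Fin n → ℕ := fun k => if k ∈ T then lam k else 0
  set c' : Fin n → ℕ := fun k => if k ∈ T then (b ∘ Tuple.sort b) k else 0
  have hclam : c ≤ lam := fun k => by by_cases hk : k ∈ T <;> simp [c, hk]
  have hcb : c' ≤ b ∘ Tuple.sort b := fun k => by by_cases hk : k ∈ T <;> simp [c', hk]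
  have hsum : ∑ k, c k < ∑ k, c' k := by
    rwa [Finset.sum_ite_mem, Finset.sum_ite_mem, Finset.univ_inter, ← topSum_eq_sum_topIndices hlam,
      ← topSum_eq_sum_topIndices hbs, topSum_comp_perm]
  obtain ⟨i, hi, b'', hb'', hcb'', hib''⟩ :=
    hex.exists_augment hdeg hlamB (hsym b hb _) hclam hcb hsum
  have hiT : i ∈ T := by
    by_contra h
    simp [c, c', h] at hi
  have hsub : ∀ l ≤ m, ∀ x ∈ topIndices l, lam x ≤ b'' x := fun l hl x hx => by
    have hxT : x ∈ T := topIndices_mono hl hx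
    simpa [c, hxT] using hcb'' x
  refine ⟨b'', hb'', fun l hl => ?_, ?_⟩ <;> rw [topSum_eq_sum_topIndices hlam]
  · exact (Finset.sum_le_sum (hsub l hl)).trans (sum_le_topSum card_topIndices_le)
  · refine (Finset.sum_lt_sum (hsub m le_rfl) ⟨i, hiT, ?_⟩).trans_le
      (sum_le_topSum card_topIndices_le)
    simpa [c, hiT] using hib''

/-- A base whose vector `(topSum 0, topSum 1, …)` is lexicographically largest dominates all
others: a base beating it at some level `m` could be improved, by augmentation, to one that
beats it at level `m` without losing at any level `l ≤ m`. -/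
lemma HasExchange.exists_dominant (hex : HasExchange B) (hdeg : ∀ b ∈ B, ∑ i, b i = d)
    (hsym : IsSymmetricSet B) (hne : B.Nonempty) :
    ∃ lam ∈ B, Monotone lam ∧ ∀ b ∈ B, ∀ m, topSum m b ≤ topSum m lam := by
  have hfin : B.Finite := (Finset.Nat.antidiagonalTuple n d).finite_toSet.subset
    fun b hb => Finset.Nat.mem_antidiagonalTuple.2 (hdeg b hb)
  obtain ⟨lam, hlamB, hmax⟩ := B.exists_max_image (fun x => toLex fun m => topSum m x) hfin hne
  have hsorted : Monotone (lam ∘ Tuple.sort lam) := Tuple.monotone_sort lam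
  refine ⟨_, hsym lam hlamB _, hsorted, fun b hb m => ?_⟩
  by_contra! hlt
  obtain ⟨b'', hb'', hle, hlt''⟩ :=
    hex.exists_topSum_lt hdeg hsym (hsym lam hlamB _) hsorted hb hlt
  simp only [topSum_comp_perm] at hle hlt''
  exact (hmax b'' hb'').not_gt (toLex_lt_of_le_of_lt hle hlt'')

end Augmentation

section Polymatroidal

variable {K : Type} [Field K] {n : ℕ} {I : Ideal (MvPolynomial (Fin n) K)}

lemma IsPolymatroidal.hasExchange_isMinGen (hI : IsPolymatroidal K n I) {d : ℕ}
    (hd : ∀ a, IsMinGen K n I a → ∑ i, a i = d) : HasExchange {a | IsMinGen K n I a} := by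
  intro a ha b hb i hi
  obtain ⟨j, hj, hmem⟩ := hI.2.2 a b ha hb i hi
  have hji : j ≠ i := by rintro rfl; omega
  exact ⟨j, hj, isMinGen_of_sum_eq hd hmem ((sum_borelMoveVec hji (by omega)).trans (hd a ha))⟩

end Polymatroidal

theorem symmetric_polymatroidal_iff_principalBorel_general (K : Type) [Field K] (n : ℕ)
    (I : Ideal (MvPolynomial (Fin n) K))
    (hsym : IsSymmetricIdeal K n I)
    (hbot : I ≠ ⊥) :
    IsPolymatroidal K n I ↔
      ∃ lam : Fin n → ℕ, Monotone lam ∧ I = Sss K n {lam} := by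
  constructor
  · intro hI
    obtain ⟨d, hd⟩ := hI.2.1
    set B := {a | IsMinGen K n I a}
    have hspan : I = Ideal.span (mon K n '' B) := hI.1.eq_span_isMinGen
    have hBsym : IsSymmetricSet B := fun a ha σ => ha.comp_perm hsym σ
    have hex : HasExchange B := hI.hasExchange_isMinGen hd
    obtain ⟨lam, hlamB, hlam, hdom⟩ := hex.exists_dominant hd hBsym (hI.1.exists_isMinGen hbot)
    refine ⟨lam, hlam, le_antisymm ?_ ?_⟩
    · rw [hspan, sss_singleton_eq_span hlam]
      exact Ideal.span_mono <| Set.image_mono fun b hb =>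
        ⟨(hd b hb).trans (hd lam hlamB).symm, hdom b hb⟩
    · refine sInf_le ⟨hspan ▸ isSSSI_span hBsym (hBsym.isBorelClosed hex), ?_⟩
      rintro _ rfl
      exact hlamB.1
  · rintro ⟨lam, hlam, rfl⟩
    rw [sss_singleton_eq_span hlam]
    exact isPolymatroidal_span (fun a ha => ha.1) hasExchange_dominatedSet

/-- A nonzero symmetric monomial ideal is polymatroidal if and only if it is a
principal Borel symmetric strongly shifted ideal, i.e. `I = Sss({λ})` for some
partition `λ`. -/
theorem symmetric_polymatroidal_iff_principalBorel (K : Type) [Field K] (n : ℕ)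
    (I : Ideal (MvPolynomial (Fin n) K))
    (hmono : IsMonomialIdeal K n I) (hsym : IsSymmetricIdeal K n I)
    (hbot : I ≠ ⊥) :
    IsPolymatroidal K n I ↔
      ∃ lam : Fin n → ℕ, Monotone lam ∧ I = Sss K n {lam} :=
  symmetric_polymatroidal_iff_principalBorel_general K n I hsym hbot
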